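/- Let G be a graph with minimum degree δ(G) ≥ 1. Then γ_SMB'(G) = 2 if and only if G has a strong support vertex. -/

import Mathlib

/-!
Formalization of the Maker-Breaker domination game (MBD game).

In the MBD game on a graph `G`, Dominator and Staller alternately select
previously unplayed vertices.  Dominator wins when the set of vertices he has
selected is a dominating set of `G`; Staller wins when she has selected a
vertex of every dominating set of `G`, which happens exactly when the closed
neighbourhood of some vertex is entirely contained in her set of selected
vertices.
-/

/-- `D` is a dominating set of `G` (as a finset of vertices). -/
def IsDomSet {V : Type*} (G : SimpleGraph V) (D : Finset V) : Prop :=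
  ∀ v, v ∈ D ∨ ∃ u ∈ D, G.Adj u v

/-- Staller (whose selected vertices form `S`) has won: she owns the whole
closed neighbourhood of some vertex, hence a vertex of every dominating set. -/
def StallerWon {V : Type*} (G : SimpleGraph V) (S : Finset V) : Prop :=
  ∃ v, v ∈ S ∧ ∀ u, G.Adj v u → u ∈ S

section Game

variable {V : Type*} [DecidableEq V]

mutual
  /-- Position with Dominator's vertices `D`, Staller's vertices `S` and
  Dominator to move: Dominator can guarantee to complete a dominating set
  using at most `k` further moves of his own. -/
  inductive DomWinD (G : SimpleGraph V) : Finset V → Finset V → ℕ → Prop where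
    | done (D S : Finset V) (k : ℕ) : IsDomSet G D → DomWinD G D S k
    | step (D S : Finset V) (k : ℕ) (v : V) : v ∉ D → v ∉ S →
        DomWinS G (insert v D) S k → DomWinD G D S (k + 1)

  /-- Position with Dominator's vertices `D`, Staller's vertices `S` and
  Staller to move: Dominator can guarantee to complete a dominating set
  using at most `k` further moves of his own. -/
  inductive DomWinS (G : SimpleGraph V) : Finset V → Finset V → ℕ → Prop where
    | done (D S : Finset V) (k : ℕ) : IsDomSet G D → DomWinS G D S k
    | step (D S : Finset V) (k : ℕ) : (∃ w, w ∉ D ∧ w ∉ S) →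
        (∀ w, w ∉ D → w ∉ S → DomWinD G D (insert w S) k) → DomWinS G D S k
end

mutual
  /-- Position with Dominator's vertices `D`, Staller's vertices `S` and
  Staller to move: Staller can guarantee to claim a whole closed neighbourhood
  using at most `k` further moves of her own. -/
  inductive StalWinS (G : SimpleGraph V) : Finset V → Finset V → ℕ → Prop where
    | done (D S : Finset V) (k : ℕ) : StallerWon G S → StalWinS G D S k
    | step (D S : Finset V) (k : ℕ) (w : V) : w ∉ D → w ∉ S →
        StalWinD G D (insert w S) k → StalWinS G D S (k + 1)

  /-- Position with Dominator's vertices `D`, Staller's vertices `S` and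
  Dominator to move: Staller can guarantee to claim a whole closed
  neighbourhood using at most `k` further moves of her own. -/
  inductive StalWinD (G : SimpleGraph V) : Finset V → Finset V → ℕ → Prop where
    | done (D S : Finset V) (k : ℕ) : StallerWon G S → StalWinD G D S k
    | step (D S : Finset V) (k : ℕ) : (∃ v, v ∉ D ∧ v ∉ S) →
        (∀ v, v ∉ D → v ∉ S → StalWinS G (insert v D) S k) → StalWinD G D S k
end

/-- `γ_MB(G)`: minimum number of Dominator's moves with which he can guarantee
to win the D-game (Dominator moves first); `⊤` if he cannot win it. -/
noncomputable def gammaMB (G : SimpleGraph V) : ℕ∞ :=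
  sInf {k : ℕ∞ | ∃ n : ℕ, k = n ∧ DomWinD G ∅ ∅ n}

/-- `γ_MB'(G)`: minimum number of Dominator's moves with which he can guarantee
to win the S-game (Staller moves first); `⊤` if he cannot win it. -/
noncomputable def gammaMB' (G : SimpleGraph V) : ℕ∞ :=
  sInf {k : ℕ∞ | ∃ n : ℕ, k = n ∧ DomWinS G ∅ ∅ n}

/-- `γ_SMB(G)`: minimum number of Staller's moves with which she can guarantee
to win the D-game (Dominator moves first); `⊤` if she cannot win it. -/
noncomputable def gammaSMB (G : SimpleGraph V) : ℕ∞ :=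
  sInf {k : ℕ∞ | ∃ n : ℕ, k = n ∧ StalWinD G ∅ ∅ n}

/-- `γ_SMB'(G)`: minimum number of Staller's moves with which she can guarantee
to win the S-game (Staller moves first); `⊤` if she cannot win it. -/
noncomputable def gammaSMB' (G : SimpleGraph V) : ℕ∞ :=
  sInf {k : ℕ∞ | ∃ n : ℕ, k = n ∧ StalWinS G ∅ ∅ n}

/-- Outcome `𝒟`: Dominator has a winning strategy no matter who starts. -/
def OutcomeD (G : SimpleGraph V) : Prop :=
  (∃ n, DomWinD G ∅ ∅ n) ∧ (∃ n, DomWinS G ∅ ∅ n)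

/-- Outcome `𝒮`: Staller has a winning strategy no matter who starts. -/
def OutcomeS (G : SimpleGraph V) : Prop :=
  (∃ n, StalWinD G ∅ ∅ n) ∧ (∃ n, StalWinS G ∅ ∅ n)

/-- Outcome `𝒩`: the first player has a winning strategy. -/
def OutcomeN (G : SimpleGraph V) : Prop :=
  (∃ n, DomWinD G ∅ ∅ n) ∧ (∃ n, StalWinS G ∅ ∅ n)

end Game

/-- The corona product `G ⊙ H`: one copy of `G`, a copy of `H` for every
vertex of `G`, and the `i`-th vertex of `G` joined to every vertex of the
`i`-th copy of `H`. -/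
def coronaProd {α β : Type*} (G : SimpleGraph α) (H : SimpleGraph β) :
    SimpleGraph (α ⊕ α × β) where
  Adj x y :=
    match x, y with
    | Sum.inl a, Sum.inl a' => G.Adj a a'
    | Sum.inl a, Sum.inr p => a = p.1
    | Sum.inr p, Sum.inl a => a = p.1
    | Sum.inr p, Sum.inr q => p.1 = q.1 ∧ H.Adj p.2 q.2
  symm := by
    constructor
    rintro (a | p) (a' | q) h
    · exact G.adj_symm h
    · exact h
    · exact h
    · exact ⟨h.1.symm, H.adj_symm h.2⟩
  loopless := by
    constructor
    rintro (a | p) h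
    · exact G.irrefl h
    · exact H.irrefl h.2

/-- The domination number `γ(G)` of a finite graph. -/
noncomputable def domNumber {V : Type*} [Fintype V] (G : SimpleGraph V) : ℕ :=
  sInf {n : ℕ | ∃ D : Finset V, D.card = n ∧ IsDomSet G D}

/-- `v` is a dominating vertex: it is adjacent to all other vertices. -/
def IsDomVertex {V : Type*} (G : SimpleGraph V) (v : V) : Prop :=
  ∀ u, u ≠ v → G.Adj v u

/-- `v` is an isolated vertex (degree `0`). -/
def IsIsolatedVertex {V : Type*} (G : SimpleGraph V) (v : V) : Prop :=
  ∀ u, ¬ G.Adj v u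

/-- `v` is a leaf (degree `1`). -/
def IsLeaf {V : Type*} (G : SimpleGraph V) (v : V) : Prop :=
  ∃! u, G.Adj v u

/-- `v` is a strong support vertex: adjacent to at least two leaves. -/
def IsStrongSupport {V : Type*} (G : SimpleGraph V) (v : V) : Prop :=
  ∃ u w, u ≠ w ∧ G.Adj v u ∧ G.Adj v w ∧ IsLeaf G u ∧ IsLeaf G w

/-
With no isolated vertex, Staller cannot win with a single vertex, and a pair of her vertices
contains a whole closed neighbourhood exactly when it is a leaf together with its neighbour.
So a two-move win starts at a vertex `w` such that, whatever single vertex Dominator takes,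
some leaf hanging at `w` is still free; `w` cannot itself be a leaf (Dominator takes its
neighbour), and answering one such leaf forces a second one. Conversely, at a strong support
vertex Staller plays the vertex first and then whichever of its two leaves Dominator left.
-/

lemma sInf_natCast_setOf_eq_natCast_iff (P : ℕ → Prop) (m : ℕ) :
    sInf {k : ℕ∞ | ∃ n : ℕ, k = n ∧ P n} = m ↔ IsLeast {n | P n} m := by
  constructor
  · intro h
    have hne : {k : ℕ∞ | ∃ n : ℕ, k = n ∧ P n}.Nonempty := by
      by_contra hempty
      rw [Set.not_nonempty_iff_eq_empty.mp hempty, sInf_empty] at h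
      exact ENat.top_ne_natCast m h
    obtain ⟨n, hn, hPn⟩ := h ▸ csInf_mem hne
    refine ⟨(Nat.cast_injective hn : m = n) ▸ hPn, fun k hk => ?_⟩
    have hle : sInf {k : ℕ∞ | ∃ n : ℕ, k = n ∧ P n} ≤ k := sInf_le ⟨k, rfl, hk⟩
    rw [h] at hle
    exact_mod_cast hle
  · rintro ⟨hm, hmin⟩
    refine le_antisymm (sInf_le ⟨m, rfl, hm⟩) (le_sInf ?_)
    rintro _ ⟨k, rfl, hk⟩
    exact_mod_cast hmin hk

section Graph

variable {V : Type*} {G : SimpleGraph V}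

lemma isLeaf_and_adj_of_forall_adj_eq (hG : ∀ v, ∃ u, G.Adj v u) {ℓ v : V}
    (h : ∀ u, G.Adj ℓ u → u = v) : IsLeaf G ℓ ∧ G.Adj ℓ v := by
  obtain ⟨u, hu⟩ := hG ℓ
  have hadj : G.Adj ℓ v := h u hu ▸ hu
  exact ⟨⟨v, hadj, h⟩, hadj⟩

lemma not_stallerWon_empty : ¬ StallerWon G ∅ := by
  rintro ⟨v, hv, -⟩
  exact Finset.notMem_empty v hv

lemma not_stallerWon_singleton (hG : ∀ v, ∃ u, G.Adj v u) (v : V) : ¬ StallerWon G {v} := by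
  rintro ⟨x, hx, hN⟩
  obtain ⟨u, hu⟩ := hG x
  rw [Finset.mem_singleton] at hx
  exact hu.ne (by rw [hx, Finset.mem_singleton.mp (hN u hu)])

variable [DecidableEq V]

lemma stallerWon_pair_of_isLeaf {ℓ v : V} (hℓ : IsLeaf G ℓ) (h : G.Adj ℓ v) :
    StallerWon G {ℓ, v} :=
  ⟨ℓ, Finset.mem_insert_self ℓ {v}, fun u hu => by simp [ExistsUnique.unique hℓ hu h]⟩

lemma isLeaf_and_adj_of_stallerWon_pair (hG : ∀ v, ∃ u, G.Adj v u) {a b : V}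
    (h : StallerWon G {a, b}) : IsLeaf G a ∧ G.Adj a b ∨ IsLeaf G b ∧ G.Adj b a := by
  obtain ⟨x, hx, hN⟩ := h
  have hN' : ∀ u, G.Adj x u → u = a ∨ u = b := fun u hu => by simpa using hN u hu
  rw [Finset.mem_insert, Finset.mem_singleton] at hx
  rcases hx with rfl | rfl
  · exact .inl <| isLeaf_and_adj_of_forall_adj_eq hG fun u hu =>
      (hN' u hu).resolve_left hu.ne'
  · exact .inr <| isLeaf_and_adj_of_forall_adj_eq hG fun u hu =>
      (hN' u hu).resolve_right hu.ne'

lemma isStrongSupport_of_forall_exists_stallerWon_pair (hG : ∀ v, ∃ u, G.Adj v u) (w : V)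
    (h : ∀ v ≠ w, ∃ u ≠ v, u ≠ w ∧ StallerWon G {u, w}) : IsStrongSupport G w := by
  have hadj {u : V} (hu : StallerWon G {u, w}) : G.Adj w u := by
    rcases isLeaf_and_adj_of_stallerWon_pair hG hu with ⟨-, h⟩ | ⟨-, h⟩
    exacts [h.symm, h]
  have hw : ¬ IsLeaf G w := by
    intro hw
    obtain ⟨x, hx, -⟩ := id hw
    obtain ⟨u, hux, -, hu⟩ := h x hx.ne'
    exact hux (ExistsUnique.unique hw (hadj hu) hx)
  have hleaf : ∀ v ≠ w, ∃ u ≠ v, IsLeaf G u ∧ G.Adj w u := by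
    intro v hv
    obtain ⟨u, huv, -, hu⟩ := h v hv
    rcases isLeaf_and_adj_of_stallerWon_pair hG hu with ⟨hℓ, hwu⟩ | ⟨hℓ, -⟩
    · exact ⟨u, huv, hℓ, hwu.symm⟩
    · exact absurd hℓ hw
  obtain ⟨x, hx⟩ := hG w
  obtain ⟨u₁, -, hu₁, h₁⟩ := hleaf x hx.ne'
  obtain ⟨u₂, hne, hu₂, h₂⟩ := hleaf u₁ h₁.ne'
  exact ⟨u₁, u₂, hne.symm, h₁, h₂, hu₁, hu₂⟩

end Graph

section Game

variable {V : Type*} [DecidableEq V] {G : SimpleGraph V} {D S : Finset V}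

lemma StalWinS.stallerWon_of_zero (h : StalWinS G D S 0) : StallerWon G S := by
  cases h with
  | done _ _ _ h => exact h

lemma StalWinD.stallerWon_of_zero (h : StalWinD G D S 0) : StallerWon G S := by
  cases h with
  | done _ _ _ h => exact h
  | step _ _ _ hfree hall =>
    obtain ⟨v, hvD, hvS⟩ := hfree
    exact (hall v hvD hvS).stallerWon_of_zero

lemma StalWinS.exists_winning_move_of_one (h : StalWinS G D S 1) :
    StallerWon G S ∨ ∃ w ∉ D, w ∉ S ∧ StallerWon G (insert w S) := by
  cases h with
  | done _ _ _ h => exact .inl h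
  | step _ _ _ w hwD hwS h => exact .inr ⟨w, hwD, hwS, h.stallerWon_of_zero⟩

lemma two_le_of_stalWinS_empty (hG : ∀ v, ∃ u, G.Adj v u) {n : ℕ} (h : StalWinS G ∅ ∅ n) :
    2 ≤ n := by
  match n, h with
  | 0, h => exact absurd h.stallerWon_of_zero not_stallerWon_empty
  | 1, h =>
    rcases h.exists_winning_move_of_one with h | ⟨w, -, -, h⟩
    · exact absurd h not_stallerWon_empty
    · exact absurd h (not_stallerWon_singleton hG w)
  | _ + 2, _ => omega

lemma stalWinS_two_of_isStrongSupport {v : V} (h : IsStrongSupport G v) : StalWinS G ∅ ∅ 2 := by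
  obtain ⟨u, w, huw, hvu, hvw, hu, hw⟩ := h
  refine .step ∅ ∅ 1 v (Finset.notMem_empty v) (Finset.notMem_empty v) <|
    .step ∅ {v} 1 ⟨u, Finset.notMem_empty u, by simp [hvu.ne']⟩ fun x _ hxv => ?_
  have hleaf {ℓ : V} (hℓ : IsLeaf G ℓ) (hvℓ : G.Adj v ℓ) (hxℓ : ℓ ≠ x) :
      StalWinS G {x} {v} 1 :=
    .step _ _ 0 ℓ (by simpa using hxℓ) (by simpa using hvℓ.ne') <|
      .done _ _ _ (stallerWon_pair_of_isLeaf hℓ hvℓ.symm)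
  by_cases hxu : u = x
  · exact hleaf hw hvw (hxu ▸ huw.symm)
  · exact hleaf hu hvu hxu

lemma isStrongSupport_of_stalWinS_two (hG : ∀ v, ∃ u, G.Adj v u) (h : StalWinS G ∅ ∅ 2) :
    ∃ v, IsStrongSupport G v := by
  cases h with
  | done _ _ _ h => exact absurd h not_stallerWon_empty
  | step _ _ _ w _ _ h =>
    cases h with
    | done _ _ _ h => exact absurd h (not_stallerWon_singleton hG w)
    | step _ _ _ _ hall =>
      refine ⟨w, isStrongSupport_of_forall_exists_stallerWon_pair hG w fun v hv => ?_⟩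
      rcases (hall v (Finset.notMem_empty v) (by simpa using hv)).exists_winning_move_of_one
        with h | ⟨u, huv, huw, h⟩
      · exact absurd h (not_stallerWon_singleton hG w)
      · exact ⟨u, by simpa using huv, by simpa using huw, by simpa using h⟩

end Game

/-- Let `G` be a graph with `δ(G) ≥ 1`.  Then `γ_SMB'(G) = 2` if and only if
`G` has a strong support vertex. -/
theorem gammaSMB'_eq_two_iff {V : Type*} [Fintype V] [DecidableEq V]
    (G : SimpleGraph V) (hdelta : ∀ v, ∃ u, G.Adj v u) :
    gammaSMB' G = 2 ↔ ∃ v, IsStrongSupport G v := by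
  rw [gammaSMB', ← Nat.cast_ofNat, sInf_natCast_setOf_eq_natCast_iff]
  refine ⟨fun h => isStrongSupport_of_stalWinS_two hdelta h.1, fun ⟨v, hv⟩ => ?_⟩
  exact ⟨stalWinS_two_of_isStrongSupport hv, fun n hn => two_le_of_stalWinS_empty hdelta hn⟩
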